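/- For all bi-labeled graphs 𝐅₁ = (F₁, a₁, b₁) ∈ M^{k,m} and 𝐅₂ = (F₂, a₂, b₂) ∈ M^{m,ℓ} and every graphon W, the graphon operator of the composition equals the composition of the graphon operators: T_{𝐅₁∘𝐅₂, W} = T_{𝐅₁,W} ∘ T_{𝐅₂,W} as operators L²(X^ℓ, μ^{⊗ℓ}) → L²(X^k, μ^{⊗k}). -/

import Mathlib

/-!
Identify `X^{V₁ ⊔ V₂}` with `X^{V₁} × X^{V₂}` via `Fin.append`. Under this identification the
weight of `𝐅₁ ∘ 𝐅₂` is the weight of `𝐅₁` times the weight of `𝐅₂`, the inputs of `𝐅₂` being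
read off at the outputs of `𝐅₁` (the coordinates of `V₂` at the glued vertices are dummies, which
is harmless because `μ` is a probability measure). The claim is then Fubini's theorem. It
applies for almost every input because the full integrand is bounded by `|f|` composed with a
measure-preserving selection of coordinates (the output labels are distinct), hence integrable.
-/

open MeasureTheory

noncomputable section

/-- A bi-labeled multigraph: vertex set `Fin n`, edge multiplicities on unordered pairs,
`k` input labels and `l` output labels. -/
structure BLGraph (k l : ℕ) where
  n : ℕ
  e : Sym2 (Fin n) → ℕ
  a : Fin k → Fin n
  b : Fin l → Fin n

/-- No loops (edges only between distinct vertices) and the label tuples have pairwise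
distinct entries. -/
def BLGraph.Proper {k l : ℕ} (F : BLGraph k l) : Prop :=
  (∀ p : Sym2 (Fin F.n), p.IsDiag → F.e p = 0) ∧
    Function.Injective F.a ∧ Function.Injective F.b

/-- A graphon: symmetric measurable `W : X × X → [0,1]`. -/
structure IsGraphon {X : Type*} [MeasurableSpace X] (W : X → X → ℝ) : Prop where
  measurable : Measurable (Function.uncurry W)
  symm : ∀ x y, W x y = W y x
  nonneg : ∀ x y, 0 ≤ W x y
  le_one : ∀ x y, W x y ≤ 1

/-- Symmetrized evaluation of `W` on an unordered pair; agrees with `W` when `W` is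
symmetric. -/
def symApp {X : Type*} (W : X → X → ℝ) : Sym2 X → ℝ :=
  Sym2.lift ⟨fun x y => (W x y + W y x) / 2, fun x y => by ring⟩

/-- The product over all edges (with multiplicity) of the `W`-weights. -/
def edgeProd {X : Type*} (W : X → X → ℝ) {n : ℕ} (e : Sym2 (Fin n) → ℕ)
    (z : Fin n → X) : ℝ :=
  ∏ p : Sym2 (Fin n), symApp W (p.map z) ^ e p

open Classical in
/-- Combine the fixed values `x` on the input-labeled vertices with `y` elsewhere. -/
def extend {X : Type*} {k n : ℕ} (a : Fin k → Fin n) (x : Fin k → X) (y : Fin n → X) :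
    Fin n → X :=
  fun v => if h : ∃ i, a i = v then x h.choose else y v

/-- The graphon operator `T_{𝐅,W}` of a bi-labeled graph, as a map on plain functions:
`(T_{𝐅,W} f)(x_{a_1},…,x_{a_k}) = ∫ (∏_{ij ∈ E} W(x_i,x_j)) f(x_{b_1},…,x_{b_l})`,
the integral being over the non-input coordinates (extra coordinates integrate to `1`
since `μ` is a probability measure). -/
def rawOp {X : Type*} [MeasurableSpace X] (μ : Measure X) (W : X → X → ℝ)
    {k l : ℕ} (F : BLGraph k l) (f : (Fin l → X) → ℝ) (x : Fin k → X) : ℝ :=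
  ∫ y : Fin F.n → X,
    edgeProd W F.e (extend F.a x y) * f (fun i => extend F.a x y (F.b i))
    ∂(Measure.pi fun _ => μ)

/-- Push forward edge multiplicities along a map of vertex sets. -/
def pushEdges {n m : ℕ} (φ : Fin n → Fin m) (e : Sym2 (Fin n) → ℕ) : Sym2 (Fin m) → ℕ :=
  fun q => ∑ p : Sym2 (Fin n), if p.map φ = q then e p else 0

open Classical in
/-- The gluing map used for composition: a vertex of the second graph lying in the range of
its input labels `a₂` is identified with the corresponding output-labeled vertex of the first
graph, all other vertices are kept (as the second summand of `Fin (n₁ + n₂)`). -/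
def glueMap {m n₁ n₂ : ℕ} (b₁ : Fin m → Fin n₁) (a₂ : Fin m → Fin n₂) (v : Fin n₂) :
    Fin (n₁ + n₂) :=
  if h : ∃ i, a₂ i = v then Fin.castAdd n₂ (b₁ h.choose) else Fin.natAdd n₁ v

/-- Composition of bi-labeled graphs: glue the output vertices of `F₁` to the input vertices
of `F₂` (edge multiplicities adding up); the inputs of the composition are those of `F₁` and
the outputs those of `F₂`. -/
def BLGraph.comp {k m l : ℕ} (F₁ : BLGraph k m) (F₂ : BLGraph m l) : BLGraph k l where
  n := F₁.n + F₂.n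
  e := fun q =>
    pushEdges (Fin.castAdd F₂.n) F₁.e q + pushEdges (glueMap F₁.b F₂.a) F₂.e q
  a := fun i => Fin.castAdd F₂.n (F₁.a i)
  b := fun i => glueMap F₁.b F₂.a (F₂.b i)

theorem extend_eq_function_extend {X : Type*} {k n : ℕ} (a : Fin k → Fin n) (x : Fin k → X)
    (y : Fin n → X) : extend a x y = Function.extend a x y :=
  funext fun v => (Function.extend_def a x y v).symm

theorem glueMap_eq_function_extend {m n₁ n₂ : ℕ} (b₁ : Fin m → Fin n₁) (a₂ : Fin m → Fin n₂) :
    glueMap b₁ a₂ = Function.extend a₂ (Fin.castAdd n₂ ∘ b₁) (Fin.natAdd n₁) :=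
  funext fun v => (Function.extend_def a₂ (Fin.castAdd n₂ ∘ b₁) (Fin.natAdd n₁) v).symm

theorem Function.injective_extend_of_disjoint {α β γ : Type*} {f : α → β} {g : α → γ}
    {e' : β → γ} (hg : Function.Injective g) (he' : Function.Injective e')
    (hdisj : ∀ a b, g a ≠ e' b) : Function.Injective (Function.extend f g e') := by
  classical
  intro b b' h
  simp only [Function.extend_def] at h
  split_ifs at h with hb hb'
  · rw [← Classical.choose_spec hb, ← Classical.choose_spec hb', hg h]
  · exact absurd h (hdisj _ _)
  · exact absurd h.symm (hdisj _ _)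
  · exact he' h

theorem Fin.castAdd_ne_natAdd {n₁ n₂ : ℕ} (u : Fin n₁) (v : Fin n₂) :
    Fin.castAdd n₂ u ≠ Fin.natAdd n₁ v := by
  rw [Ne, Fin.ext_iff, Fin.val_castAdd, Fin.val_natAdd]
  omega

theorem glueMap_injective {m n₁ n₂ : ℕ} {b₁ : Fin m → Fin n₁} (hb₁ : Function.Injective b₁)
    (a₂ : Fin m → Fin n₂) : Function.Injective (glueMap b₁ a₂) := by
  rw [glueMap_eq_function_extend]
  exact Function.injective_extend_of_disjoint ((Fin.castAdd_injective _ _).comp hb₁)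
    (Fin.natAdd_injective _ _) fun _ _ => Fin.castAdd_ne_natAdd _ _

theorem comp_glueMap {X : Type*} {m n₁ n₂ : ℕ} (b₁ : Fin m → Fin n₁) (a₂ : Fin m → Fin n₂)
    (Z : Fin (n₁ + n₂) → X) :
    Z ∘ glueMap b₁ a₂ = Function.extend a₂ (Z ∘ Fin.castAdd n₂ ∘ b₁) (Z ∘ Fin.natAdd n₁) := by
  rw [glueMap_eq_function_extend]
  exact funext fun v => Function.apply_extend Z a₂ (Fin.natAdd n₁) v

section EdgeProd

variable {X : Type*} (W : X → X → ℝ) {n : ℕ}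

theorem edgeProd_add (e₁ e₂ : Sym2 (Fin n) → ℕ) (z : Fin n → X) :
    edgeProd W (fun p => e₁ p + e₂ p) z = edgeProd W e₁ z * edgeProd W e₂ z := by
  simp only [edgeProd, pow_add, Finset.prod_mul_distrib]

theorem edgeProd_pushEdges {n' : ℕ} (φ : Fin n → Fin n') (e : Sym2 (Fin n) → ℕ)
    (z : Fin n' → X) : edgeProd W (pushEdges φ e) z = edgeProd W e (z ∘ φ) := by
  simp only [edgeProd, pushEdges, ← Finset.prod_pow_eq_pow_sum]
  rw [Finset.prod_comm]
  refine Finset.prod_congr rfl fun p _ => ?_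
  rw [Finset.prod_eq_single_of_mem (p.map φ) (Finset.mem_univ _) fun q _ hq => ?_,
    if_pos rfl, Sym2.map_map]
  rw [if_neg (Ne.symm hq), pow_zero]

end EdgeProd

namespace IsGraphon

variable {X : Type*} [MeasurableSpace X] {W : X → X → ℝ}

theorem abs_symApp_le_one (hW : IsGraphon W) (p : Sym2 X) : |symApp W p| ≤ 1 := by
  induction p using Sym2.ind with
  | _ x y =>
    show |(W x y + W y x) / 2| ≤ 1
    have := hW.nonneg x y
    have := hW.nonneg y x
    have := hW.le_one x y
    have := hW.le_one y x
    rw [abs_le]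
    constructor <;> linarith

theorem norm_edgeProd_le_one (hW : IsGraphon W) {n : ℕ} (e : Sym2 (Fin n) → ℕ)
    (z : Fin n → X) : ‖edgeProd W e z‖ ≤ 1 := by
  rw [edgeProd, norm_prod]
  refine Finset.prod_le_one (fun _ _ => norm_nonneg _) fun p _ => ?_
  rw [norm_pow]
  exact pow_le_one₀ (norm_nonneg _) (hW.abs_symApp_le_one _)

theorem measurable_edgeProd (hW : IsGraphon W) {n : ℕ} (e : Sym2 (Fin n) → ℕ) :
    Measurable (edgeProd W e) := by
  refine Finset.measurable_prod _ fun p _ => Measurable.pow_const ?_ _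
  induction p using Sym2.ind with
  | _ i j =>
    have hW' : Measurable (Function.uncurry W) := hW.measurable
    show Measurable fun z : Fin n → X => (W (z i) (z j) + W (z j) (z i)) / 2
    fun_prop

end IsGraphon

section ProductMeasure

variable {X : Type*} [MeasurableSpace X] (μ : Measure X) [IsProbabilityMeasure μ]

theorem measurePreserving_comp_of_injective {ι κ : Type*} [Fintype ι] [Fintype κ] {σ : ι → κ}
    (hσ : Function.Injective σ) :
    MeasurePreserving (fun z : κ → X => z ∘ σ) (Measure.pi fun _ => μ) (Measure.pi fun _ => μ) := by
  have hmeas : Measurable fun z : κ → X => z ∘ σ :=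
    measurable_pi_lambda _ fun i => measurable_pi_apply _
  refine ⟨hmeas, (Measure.pi_eq fun s hs => ?_).symm⟩
  -- the preimage of a box is the box with factors `s i` at `σ i` and `univ` off the range
  set t : κ → Set X := Function.extend σ s fun _ => Set.univ
  have hpre : (fun z : κ → X => z ∘ σ) ⁻¹' Set.univ.pi s = Set.univ.pi t := by
    ext z
    simp only [Set.mem_preimage, Set.mem_univ_pi, Function.comp_apply]
    refine ⟨fun hz j => ?_, fun hz i => by simpa [t, hσ.extend_apply] using hz (σ i)⟩
    by_cases hj : ∃ i, σ i = j
    · obtain ⟨i, rfl⟩ := hj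
      simpa [t, hσ.extend_apply] using hz i
    · simp [t, Function.extend_apply' _ _ _ hj]
  rw [Measure.map_apply hmeas (.univ_pi hs), hpre, Measure.pi_pi]
  refine (Fintype.prod_of_injective σ hσ (fun i => μ (s i)) (fun j => μ (t j)) (fun j hj => ?_)
    fun i => by simp [t, hσ.extend_apply]).symm
  simp [t, Function.extend_apply' _ _ _ hj]

theorem measurePreserving_function_extend {ι κ : Type*} [Fintype ι] [Fintype κ] (a : ι → κ) :
    MeasurePreserving (fun p : (ι → X) × (κ → X) => Function.extend a p.1 p.2)
      ((Measure.pi fun _ => μ).prod (Measure.pi fun _ => μ)) (Measure.pi fun _ => μ) := by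
  -- `Function.extend a x y` reads the coordinates of `Sum.elim x y` along an injection
  have hτ : Function.Injective (Function.extend a Sum.inl Sum.inr : κ → ι ⊕ κ) :=
    Function.injective_extend_of_disjoint Sum.inl_injective Sum.inr_injective
      fun _ _ => Sum.inl_ne_inr
  convert (measurePreserving_comp_of_injective μ hτ).comp
    (measurePreserving_sumPiEquivProdPi_symm fun _ : ι ⊕ κ => μ) using 1
  funext p
  ext v
  exact (Function.apply_extend ((MeasurableEquiv.sumPiEquivProdPi fun _ : ι ⊕ κ => X).symm p)
    a Sum.inr v (g := Sum.inl)).symm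

def finAppendMeasurableEquiv (X : Type*) [MeasurableSpace X] (n₁ n₂ : ℕ) :
    ((Fin n₁ → X) × (Fin n₂ → X)) ≃ᵐ (Fin (n₁ + n₂) → X) :=
  (MeasurableEquiv.sumPiEquivProdPi fun _ => X).symm.trans
    (MeasurableEquiv.piCongrLeft (fun _ => X) finSumFinEquiv)

theorem finAppendMeasurableEquiv_apply {n₁ n₂ : ℕ} (p : (Fin n₁ → X) × (Fin n₂ → X)) :
    finAppendMeasurableEquiv X n₁ n₂ p = Fin.append p.1 p.2 := by
  ext v
  refine Fin.addCases (fun u => ?_) (fun u => ?_) v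
  · rw [Fin.append_left, ← finSumFinEquiv_apply_left, finAppendMeasurableEquiv,
      MeasurableEquiv.trans_apply, MeasurableEquiv.piCongrLeft_apply_apply]
    rfl
  · rw [Fin.append_right, ← finSumFinEquiv_apply_right, finAppendMeasurableEquiv,
      MeasurableEquiv.trans_apply, MeasurableEquiv.piCongrLeft_apply_apply]
    rfl

theorem measurePreserving_finAppendMeasurableEquiv (n₁ n₂ : ℕ) :
    MeasurePreserving (finAppendMeasurableEquiv X n₁ n₂)
      ((Measure.pi fun _ => μ).prod (Measure.pi fun _ => μ)) (Measure.pi fun _ => μ) :=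
  (measurePreserving_piCongrLeft (fun _ => μ) finSumFinEquiv).comp
    (measurePreserving_sumPiEquivProdPi_symm fun _ => μ)

end ProductMeasure

namespace BLGraph

variable {X : Type*} {k m l : ℕ}

def integrand (W : X → X → ℝ) (F : BLGraph k l) (f : (Fin l → X) → ℝ) (x : Fin k → X)
    (y : Fin F.n → X) : ℝ :=
  edgeProd W F.e (extend F.a x y) * f (fun i => extend F.a x y (F.b i))

theorem integral_integrand (W : X → X → ℝ) {Z : Type*} [MeasurableSpace Z] (ν : Measure Z)
    (F : BLGraph k l) (g : Z → (Fin l → X) → ℝ) (x : Fin k → X) (y : Fin F.n → X) :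
    ∫ z, F.integrand W (g z) x y ∂ν = F.integrand W (fun x' => ∫ z, g z x' ∂ν) x y :=
  integral_const_mul _ _

theorem integrable_integrand [MeasurableSpace X] {μ : Measure X} [IsProbabilityMeasure μ]
    {W : X → X → ℝ} (hW : IsGraphon W) (F : BLGraph k l) (hb : Function.Injective F.b)
    {f : (Fin l → X) → ℝ} (hf : Integrable f (Measure.pi fun _ => μ)) :
    Integrable (fun p : (Fin k → X) × (Fin F.n → X) => F.integrand W f p.1 p.2)
      ((Measure.pi fun _ => μ).prod (Measure.pi fun _ => μ)) := by
  have hext := measurePreserving_function_extend μ F.a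
  have hsel := (measurePreserving_comp_of_injective μ hb).comp hext
  simp only [integrand, extend_eq_function_extend]
  exact (hsel.integrable_comp_of_integrable hf).bdd_mul
    ((hW.measurable_edgeProd F.e).comp hext.measurable).aestronglyMeasurable
    (ae_of_all _ fun _ => hW.norm_edgeProd_le_one _ _)

theorem integrand_comp_append (W : X → X → ℝ) (F₁ : BLGraph k m) (F₂ : BLGraph m l)
    (ha₁ : Function.Injective F₁.a) (f : (Fin l → X) → ℝ) (x : Fin k → X)
    (y₁ : Fin F₁.n → X) (y₂ : Fin F₂.n → X) :
    (F₁.comp F₂).integrand W f x (Fin.append y₁ y₂) =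
      F₁.integrand W (fun x' => F₂.integrand W f x' y₂) x y₁ := by
  set Z : Fin (F₁.n + F₂.n) → X :=
    extend (fun i => Fin.castAdd F₂.n (F₁.a i)) x (Fin.append y₁ y₂) with hZ
  have hZ_castAdd : Z ∘ Fin.castAdd F₂.n = extend F₁.a x y₁ := by
    rw [hZ, extend_eq_function_extend, extend_eq_function_extend]
    change Function.extend (Fin.castAdd F₂.n ∘ F₁.a) x (Fin.append y₁ y₂) ∘ _ = _
    rw [ha₁.extend_comp (Fin.castAdd_injective _ _),
      Function.extend_comp (Fin.castAdd_injective _ _)]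
    exact congrArg _ (funext (Fin.append_left y₁ y₂))
  have hZ_natAdd : Z ∘ Fin.natAdd F₁.n = y₂ := by
    refine funext fun v => ?_
    rw [Function.comp_apply, hZ, extend_eq_function_extend, Function.extend_apply',
      Fin.append_right]
    rintro ⟨i, hi⟩
    exact Fin.castAdd_ne_natAdd _ _ hi
  have hZ_glueMap : Z ∘ glueMap F₁.b F₂.a = extend F₂.a (extend F₁.a x y₁ ∘ F₁.b) y₂ := by
    rw [comp_glueMap, ← Function.comp_assoc, hZ_castAdd, hZ_natAdd, extend_eq_function_extend F₂.a]
  change edgeProd W (fun q => pushEdges (Fin.castAdd F₂.n) F₁.e q +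
      pushEdges (glueMap F₁.b F₂.a) F₂.e q) Z * f ((Z ∘ glueMap F₁.b F₂.a) ∘ F₂.b) = _
  rw [edgeProd_add, edgeProd_pushEdges, edgeProd_pushEdges, hZ_castAdd, hZ_glueMap, mul_assoc]
  rfl

end BLGraph

theorem stmt2 {X : Type*} [MeasurableSpace X] (μ : Measure X) [IsProbabilityMeasure μ]
    (W : X → X → ℝ) (hW : IsGraphon W) {k m l : ℕ}
    (F₁ : BLGraph k m) (F₂ : BLGraph m l) (h₁ : F₁.Proper) (h₂ : F₂.Proper)
    (f : (Fin l → X) → ℝ) (hf : MemLp f 2 (Measure.pi fun _ : Fin l => μ)) :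
    rawOp μ W (F₁.comp F₂) f =ᵐ[Measure.pi fun _ : Fin k => μ]
      rawOp μ W F₁ (rawOp μ W F₂ f) := by
  obtain ⟨-, ha₁, hb₁⟩ := h₁
  obtain ⟨-, -, hb₂⟩ := h₂
  have hb : Function.Injective (F₁.comp F₂).b := (glueMap_injective hb₁ F₂.a).comp hb₂
  have happend := measurePreserving_finAppendMeasurableEquiv μ F₁.n F₂.n
  have hsplit (x : Fin k → X) (q : (Fin F₁.n → X) × (Fin F₂.n → X)) :
      (F₁.comp F₂).integrand W f x (finAppendMeasurableEquiv X F₁.n F₂.n q) =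
        F₁.integrand W (fun x' => F₂.integrand W f x' q.2) x q.1 := by
    rw [finAppendMeasurableEquiv_apply]
    exact F₁.integrand_comp_append W F₂ ha₁ f x q.1 q.2
  filter_upwards [(BLGraph.integrable_integrand hW (F₁.comp F₂) hb
    (hf.integrable one_le_two)).prod_right_ae] with x hx
  have hx' : Integrable (fun q => F₁.integrand W (fun x' => F₂.integrand W f x' q.2) x q.1)
      ((Measure.pi fun _ => μ).prod (Measure.pi fun _ => μ)) := by
    convert happend.integrable_comp_of_integrable hx using 1
    exact (funext (hsplit x)).symm
  calc rawOp μ W (F₁.comp F₂) f x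
      = ∫ q, (F₁.comp F₂).integrand W f x (finAppendMeasurableEquiv X F₁.n F₂.n q)
          ∂((Measure.pi fun _ => μ).prod (Measure.pi fun _ => μ)) :=
        (happend.integral_comp' _).symm
    _ = ∫ y₁, ∫ y₂, F₁.integrand W (fun x' => F₂.integrand W f x' y₂) x y₁
          ∂(Measure.pi fun _ => μ) ∂(Measure.pi fun _ => μ) := by
        simp only [hsplit]
        exact integral_prod _ hx'
    _ = rawOp μ W F₁ (rawOp μ W F₂ f) x := by
        simp only [BLGraph.integral_integrand]
        rfl
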